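/- arXiv:0910.3349 — 3 statements merged into one kernel-verified Lean document; each statement's English description precedes it below -/
import Mathlib

section
/- For fixed $b \geq 1$, the function $A(r) = \frac{r(1-r)^{2^b-1}}{1-(1-r)^{2^b}}$ is monotonically decreasing in $r$ on $(0,1)$. -/
/-!
Write `s = 1 - r` and `n = 2 ^ b`. Since `1 - s ^ n = r * (1 + s + ⋯ + s ^ (n - 1))`,
the reciprocal of `A(r)` is `∑_{i < n} s ^ (i - (n - 1)) = ∑_{j < n} (s⁻¹) ^ j`, a sum of
nonnegative powers of `(1 - r)⁻¹`, which increases with `r`.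
-/

open Set Finset

lemma pow_pred_mul_geom_sum_inv {K : Type*} [DivisionRing K] {x : K} (hx : x ≠ 0) (n : ℕ) :
    x ^ (n - 1) * ∑ i ∈ range n, x⁻¹ ^ i = ∑ i ∈ range n, x ^ i := by
  rw [mul_sum, ← sum_range_reflect]
  refine sum_congr rfl fun j hj => ?_
  have hjn : j ≤ n - 1 := Nat.le_sub_one_of_lt (mem_range.mp hj)
  rw [inv_pow, ← pow_sub₀ x hx (Nat.sub_le _ _), Nat.sub_sub_self hjn]

lemma mul_pow_pred_div_one_sub_pow {K : Type*} [Field K] {r : K} (hr₀ : r ≠ 0) (hr₁ : r ≠ 1)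
    (n : ℕ) :
    r * (1 - r) ^ (n - 1) / (1 - (1 - r) ^ n) = (∑ i ∈ range n, (1 - r)⁻¹ ^ i)⁻¹ := by
  have hs : 1 - r ≠ 0 := sub_ne_zero.mpr hr₁.symm
  rw [← mul_neg_geom_sum, sub_sub_cancel, ← pow_pred_mul_geom_sum_inv hs, ← mul_assoc,
    div_mul_cancel_left₀ (mul_ne_zero hr₀ (pow_ne_zero _ hs))]

lemma antitoneOn_inv_geom_sum_inv_one_sub {n : ℕ} (hn : n ≠ 0) :
    AntitoneOn (fun r : ℝ => (∑ i ∈ range n, (1 - r)⁻¹ ^ i)⁻¹) (Iio 1) := by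
  intro r hr s hs hrs
  have hr' : 0 < (1 - r)⁻¹ := inv_pos.mpr (sub_pos.mpr hr)
  have hrs' : (1 - r)⁻¹ ≤ (1 - s)⁻¹ := inv_anti₀ (sub_pos.mpr hs) (by linarith)
  refine inv_anti₀ (sum_pos (fun i _ => pow_pos hr' i) (nonempty_range_iff.mpr hn)) ?_
  exact sum_le_sum fun i _ => pow_le_pow_left₀ hr'.le hrs' i

theorem A_antitone_in_r_general (b : ℕ) :
    AntitoneOn (fun r : ℝ => r * (1 - r) ^ (2 ^ b - 1) / (1 - (1 - r) ^ (2 ^ b)))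
      (Ioo (0 : ℝ) 1) :=
  ((antitoneOn_inv_geom_sum_inv_one_sub (pow_ne_zero b two_ne_zero)).mono
    Ioo_subset_Iio_self).congr fun _ hr => (mul_pow_pred_div_one_sub_pow hr.1.ne' hr.2.ne _).symm

theorem A_antitone_in_r (b : ℕ) (hb : 1 ≤ b) :
    AntitoneOn (fun r : ℝ => r * (1 - r) ^ (2 ^ b - 1) / (1 - (1 - r) ^ (2 ^ b)))
      (Ioo (0 : ℝ) 1) :=
  A_antitone_in_r_general b
end

section
/- For every positive integer $b$ and every $r \in (0,1)$, $\frac{r(1-r)^{2^b-1}}{1-(1-r)^{2^b}} \leq \frac{1}{2^b}$. -/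
/-! With `q = 1 - r` and `n = 2 ^ b`, the denominator is `1 - q ^ n = r * (1 + q + ⋯ + q ^ (n - 1))`,
and each of the `n` terms of the geometric sum is at least its last term `q ^ (n - 1)`. -/

open Set Finset

section

variable {R : Type*} [CommRing R] [PartialOrder R] [IsOrderedRing R] {q : R}

theorem nat_mul_pow_pred_le_geom_sum (hq₀ : 0 ≤ q) (hq₁ : q ≤ 1) (n : ℕ) :
    n * q ^ (n - 1) ≤ ∑ i ∈ range n, q ^ i :=
  calc (n : R) * q ^ (n - 1) = ∑ _i ∈ range n, q ^ (n - 1) := by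
        rw [sum_const, card_range, nsmul_eq_mul]
    _ ≤ ∑ i ∈ range n, q ^ i :=
        sum_le_sum fun i hi => pow_le_pow_of_le_one hq₀ hq₁ (by grind)

theorem one_sub_mul_nat_mul_pow_pred_le_one_sub_pow (hq₀ : 0 ≤ q) (hq₁ : q ≤ 1) (n : ℕ) :
    (1 - q) * (n * q ^ (n - 1)) ≤ 1 - q ^ n := by
  rw [← mul_neg_geom_sum]
  exact mul_le_mul_of_nonneg_left (nat_mul_pow_pred_le_geom_sum hq₀ hq₁ n) (sub_nonneg.2 hq₁)

end

theorem one_sub_mul_pow_pred_div_one_sub_pow_le {K : Type*} [Field K] [LinearOrder K]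
    [IsStrictOrderedRing K] {q : K} (hq₀ : 0 ≤ q) (hq₁ : q < 1) {n : ℕ}
    (hn : n ≠ 0) : (1 - q) * q ^ (n - 1) / (1 - q ^ n) ≤ 1 / n := by
  have hden : 0 < 1 - q ^ n := sub_pos.2 (pow_lt_one₀ hq₀ hq₁ hn)
  rw [div_le_div_iff₀ hden (by positivity)]
  linarith [one_sub_mul_nat_mul_pow_pred_le_one_sub_pow hq₀ hq₁.le n]

theorem A_le_inv_two_pow_general (b : ℕ) (r : ℝ) (hr : r ∈ Ioo (0 : ℝ) 1) :
    r * (1 - r) ^ (2 ^ b - 1) / (1 - (1 - r) ^ (2 ^ b)) ≤ 1 / 2 ^ b := by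
  obtain ⟨hr₀, hr₁⟩ := hr
  have h := one_sub_mul_pow_pred_div_one_sub_pow_le (q := 1 - r) (n := 2 ^ b)
    (by linarith) (by linarith) (pow_ne_zero b two_ne_zero)
  rwa [sub_sub_cancel, Nat.cast_pow, Nat.cast_ofNat] at h

theorem A_le_inv_two_pow (b : ℕ) (hb : 1 ≤ b) (r : ℝ) (hr : r ∈ Ioo (0 : ℝ) 1) :
    r * (1 - r) ^ (2 ^ b - 1) / (1 - (1 - r) ^ (2 ^ b)) ≤ 1 / 2 ^ b :=
  A_le_inv_two_pow_general b r hr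
end

section
/- For $E \in (1/2, 1)$ let $T = E^2 + (1-E)^2$; then the function $g(E) = \frac{T(1-T)}{4(2T-1)} - E(1-E)$ has exactly one zero $E_0$ in $(1/2, 1)$, is positive to the left of it and negative to the right. -/
open Set

lemma expr_eq (E : ℝ) (h : 2 * E - 1 ≠ 0) :
    (E ^ 2 + (1 - E) ^ 2) * (1 - (E ^ 2 + (1 - E) ^ 2)) /
        (4 * (2 * (E ^ 2 + (1 - E) ^ 2) - 1)) - E * (1 - E)
      = (1 - (2 * E - 1) ^ 2) * (1 - 3 * (2 * E - 1) ^ 2) / (16 * (2 * E - 1) ^ 2) := by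
  have h4 : 4 * (2 * (E ^ 2 + (1 - E) ^ 2) - 1) = 4 * (2 * E - 1) ^ 2 := by ring
  rw [h4]
  have h2 : (2 * E - 1) ^ 2 ≠ 0 := pow_ne_zero 2 h
  rw [div_sub' (by positivity), div_eq_div_iff (by positivity) (by positivity)]
  ring

theorem variance_comparison_unique_crossing :
    ∃ E0 ∈ Ioo (1 / 2 : ℝ) 1,
      ((E0 ^ 2 + (1 - E0) ^ 2) * (1 - (E0 ^ 2 + (1 - E0) ^ 2)) /
          (4 * (2 * (E0 ^ 2 + (1 - E0) ^ 2) - 1)) - E0 * (1 - E0) = 0) ∧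
      (∀ E ∈ Ioo (1 / 2 : ℝ) 1, E < E0 →
        0 < (E ^ 2 + (1 - E) ^ 2) * (1 - (E ^ 2 + (1 - E) ^ 2)) /
          (4 * (2 * (E ^ 2 + (1 - E) ^ 2) - 1)) - E * (1 - E)) ∧
      (∀ E ∈ Ioo (1 / 2 : ℝ) 1, E0 < E →
        (E ^ 2 + (1 - E) ^ 2) * (1 - (E ^ 2 + (1 - E) ^ 2)) /
          (4 * (2 * (E ^ 2 + (1 - E) ^ 2) - 1)) - E * (1 - E) < 0) := by
  have hs3 : (0:ℝ) < Real.sqrt 3 := Real.sqrt_pos.mpr (by norm_num)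
  have hs3sq : Real.sqrt 3 ^ 2 = 3 := Real.sq_sqrt (by norm_num)
  have hs3lt : Real.sqrt 3 < 3 := by
    nlinarith [hs3sq, hs3]
  refine ⟨1 / 2 + Real.sqrt 3 / 6, ⟨by linarith, by linarith⟩, ?_, ?_, ?_⟩
  · have hu : 2 * (1 / 2 + Real.sqrt 3 / 6) - 1 = Real.sqrt 3 / 3 := by ring
    rw [expr_eq _ (by rw [hu]; positivity), hu]
    have : 1 - 3 * (Real.sqrt 3 / 3) ^ 2 = 0 := by nlinarith [hs3sq]
    rw [this]; ring
  · intro E hE hlt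
    have hu0 : 0 < 2 * E - 1 := by linarith [hE.1]
    have hu1 : 2 * E - 1 < 1 := by linarith [hE.2]
    have husq : 3 * (2 * E - 1) ^ 2 < 1 := by
      have : 2 * E - 1 < Real.sqrt 3 / 3 := by linarith
      nlinarith [hs3sq]
    rw [expr_eq _ (ne_of_gt hu0)]
    apply div_pos
    · nlinarith
    · positivity
  · intro E hE hlt
    have hu0 : 0 < 2 * E - 1 := by linarith [hE.1]
    have hu1 : 2 * E - 1 < 1 := by linarith [hE.2]
    have husq : 1 < 3 * (2 * E - 1) ^ 2 := by
      have : Real.sqrt 3 / 3 < 2 * E - 1 := by linarith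
      nlinarith [hs3sq, hs3]
    rw [expr_eq _ (ne_of_gt hu0)]
    apply div_neg_of_neg_of_pos
    · have h1 : 0 < 1 - (2 * E - 1) ^ 2 := by nlinarith
      have h2 : 1 - 3 * (2 * E - 1) ^ 2 < 0 := by linarith
      exact mul_neg_of_pos_of_neg h1 h2
    · positivity
end
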